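/- Let T, X, Y be bounded linear operators on H admitting A-adjoints T♯, X♯, Y♯ respectively. Then w_A(T∘X + Y∘T) ≤ max{‖X‖_A, ‖Y‖_A} · √( 2‖T♯∘T + T∘T♯‖_A ), and the same bound holds for w_A(T∘X − Y∘T). -/

import Mathlib

/-!
Since `⟨x, y⟩_A = ⟨√A x, √A y⟩`, the A-inner product obeys Cauchy–Schwarz and an A-adjoint
satisfies `⟨R u, v⟩_A = ⟨u, R♯ v⟩_A`. The A-operator seminorm is an `sSup`, so it only means
something once operators with an A-adjoint are known to be A-bounded. For A-selfadjoint `S`,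
Cauchy–Schwarz gives `‖S x‖_A² ≤ ‖x‖_A ‖S² x‖_A`; iterating it `n` times and bounding
`‖S^(2^n) x‖_A ≤ ‖√A‖ ‖S‖^(2^n) ‖x‖` yields `‖S x‖_A ≤ ‖S‖ ‖x‖_A` after taking `2^n`-th roots,
and `‖R x‖_A² = ⟨x, R♯R x⟩_A` reduces the general case to `S = R♯R`.

The estimate itself: `⟨(TX ± YT) x, x⟩_A = ⟨X x, T♯ x⟩_A ± ⟨T x, Y♯ x⟩_A`, whose modulus is at most
`max(‖X‖_A, ‖Y‖_A) (‖T x‖_A + ‖T♯ x‖_A)`, and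
`(‖T x‖_A + ‖T♯ x‖_A)² ≤ 2 ⟨(T♯T + TT♯) x, x⟩_A ≤ 2 ‖T♯T + TT♯‖_A ‖x‖_A²`.
-/

noncomputable section

open Complex ContinuousLinearMap

variable {H : Type*} [NormedAddCommGroup H] [InnerProductSpace ℂ H] [CompleteSpace H]

/-- The `A`-inner product `⟨x, y⟩_A = ⟨A x, y⟩`. -/
def innA (A : H →L[ℂ] H) (x y : H) : ℂ := @inner ℂ _ _ (A x) y

/-- The `A`-seminorm `‖x‖_A = √⟨A x, x⟩`. -/
def vnormA (A : H →L[ℂ] H) (x : H) : ℝ := Real.sqrt (innA A x x).re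

/-- The `A`-operator seminorm `‖T‖_A = sup {‖T x‖_A : ‖x‖_A = 1}`. -/
def opnormA (A T : H →L[ℂ] H) : ℝ :=
  sSup {r : ℝ | ∃ x : H, vnormA A x = 1 ∧ r = vnormA A (T x)}

/-- The `A`-numerical radius `w_A(T) = sup {|⟨T x, x⟩_A| : ‖x‖_A = 1}`. -/
def wA (A T : H →L[ℂ] H) : ℝ :=
  sSup {r : ℝ | ∃ x : H, vnormA A x = 1 ∧ r = ‖innA A (T x) x‖}

/-- The `A`-numerical range `W_A(T) = {⟨T x, x⟩_A : ‖x‖_A = 1}`. -/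
def WA (A T : H →L[ℂ] H) : Set ℂ :=
  {z : ℂ | ∃ x : H, vnormA A x = 1 ∧ z = innA A (T x) x}

/-- `Re_A(T) = (T + T♯)/2`, given an `A`-adjoint `Ts` of `T`. -/
def ReA (T Ts : H →L[ℂ] H) : H →L[ℂ] H := (2 : ℂ)⁻¹ • (T + Ts)

/-- `Im_A(T) = (T - T♯)/(2i)`, given an `A`-adjoint `Ts` of `T`. -/
def ImA (T Ts : H →L[ℂ] H) : H →L[ℂ] H := (2 * Complex.I)⁻¹ • (T - Ts)

/-- `Ts` is an `A`-adjoint of `T`, i.e. `A ∘ Ts = T* ∘ A`. -/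
def IsAAdjoint (A T Ts : H →L[ℂ] H) : Prop :=
  A.comp Ts = (ContinuousLinearMap.adjoint T).comp A

open scoped InnerProductSpace

set_option linter.unusedSectionVars false

theorem le_of_forall_pow_two_pow_le_mul_pow {α : Type*} [Field α] [LinearOrder α]
    [IsStrictOrderedRing α] [Archimedean α] {a c M : α} (hc : 0 ≤ c)
    (h : ∀ n : ℕ, a ^ 2 ^ n ≤ M * c ^ 2 ^ n) : a ≤ c := by
  rcases hc.eq_or_lt with rfl | hc
  · simpa using h 0
  by_contra! hca
  obtain ⟨n, hn⟩ := pow_unbounded_of_one_lt M ((one_lt_div hc).2 hca)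
  have hM : (a / c) ^ 2 ^ n ≤ M := by
    rw [div_pow, div_le_iff₀ (by positivity)]
    exact h n
  have hmono : (a / c) ^ n ≤ (a / c) ^ 2 ^ n :=
    pow_le_pow_right₀ ((one_lt_div hc).2 hca).le Nat.lt_two_pow_self.le
  linarith

section ASeminorm

variable {A R : H →L[ℂ] H}

theorem innA_eq_inner_sqrt (hA : A.IsPositive) (x y : H) :
    innA A x y = ⟪CFC.sqrt A x, CFC.sqrt A y⟫_ℂ := by
  have hsymm := isSelfAdjoint_iff_isSymmetric.mp (IsSelfAdjoint.of_nonneg (CFC.sqrt_nonneg A))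
  calc innA A x y = ⟪(CFC.sqrt A * CFC.sqrt A) x, y⟫_ℂ := by
        rw [CFC.sqrt_mul_sqrt_self A ((nonneg_iff_isPositive A).2 hA)]; rfl
    _ = _ := hsymm _ _

theorem vnormA_eq_norm_sqrt (hA : A.IsPositive) (x : H) : vnormA A x = ‖CFC.sqrt A x‖ := by
  rw [vnormA, innA_eq_inner_sqrt hA, ← RCLike.re_eq_complex_re, inner_self_eq_norm_sq,
    Real.sqrt_sq (norm_nonneg _)]

theorem vnormA_nonneg (x : H) : 0 ≤ vnormA A x := Real.sqrt_nonneg _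

theorem re_innA_self (hA : A.IsPositive) (x : H) : (innA A x x).re = vnormA A x ^ 2 := by
  rw [innA_eq_inner_sqrt hA, vnormA_eq_norm_sqrt hA, ← RCLike.re_eq_complex_re,
    inner_self_eq_norm_sq]

theorem norm_innA_le (hA : A.IsPositive) (x y : H) :
    ‖innA A x y‖ ≤ vnormA A x * vnormA A y := by
  rw [innA_eq_inner_sqrt hA, vnormA_eq_norm_sqrt hA, vnormA_eq_norm_sqrt hA]
  exact norm_inner_le_norm _ _

theorem re_innA_le (hA : A.IsPositive) (x y : H) :
    (innA A x y).re ≤ vnormA A x * vnormA A y :=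
  (Complex.re_le_norm _).trans (norm_innA_le hA x y)

theorem vnormA_smul (hA : A.IsPositive) (c : ℂ) (x : H) :
    vnormA A (c • x) = ‖c‖ * vnormA A x := by
  rw [vnormA_eq_norm_sqrt hA, vnormA_eq_norm_sqrt hA, map_smul, norm_smul]

theorem vnormA_le (hA : A.IsPositive) (x : H) : vnormA A x ≤ ‖CFC.sqrt A‖ * ‖x‖ := by
  rw [vnormA_eq_norm_sqrt hA]
  exact le_opNorm _ _

theorem innA_add_left (x y z : H) : innA A (x + y) z = innA A x z + innA A y z := by
  rw [innA, map_add, inner_add_left]; rfl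

theorem innA_sub_left (x y z : H) : innA A (x - y) z = innA A x z - innA A y z := by
  rw [innA, map_sub, inner_sub_left]; rfl

theorem opnormA_nonneg (A T : H →L[ℂ] H) : 0 ≤ opnormA A T :=
  Real.sSup_nonneg (by rintro _ ⟨x, -, rfl⟩; exact vnormA_nonneg _)

theorem vnormA_apply_le_opnormA_mul_of_le (hA : A.IsPositive) {c : ℝ}
    (hc : ∀ x, vnormA A (R x) ≤ c * vnormA A x) (x : H) :
    vnormA A (R x) ≤ opnormA A R * vnormA A x := by
  have hbdd : BddAbove {r | ∃ x, vnormA A x = 1 ∧ r = vnormA A (R x)} :=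
    ⟨c, by rintro _ ⟨y, hy, rfl⟩; simpa [hy] using hc y⟩
  rcases (vnormA_nonneg x).eq_or_lt with hx | hx
  · have := hc x
    rwa [← hx, mul_zero] at this ⊢
  have ht : ‖((vnormA A x)⁻¹ : ℂ)‖ = (vnormA A x)⁻¹ := by
    rw [← Complex.ofReal_inv, Complex.norm_real, Real.norm_of_nonneg (inv_nonneg.2 hx.le)]
  have hle : vnormA A (R (((vnormA A x)⁻¹ : ℂ) • x)) ≤ opnormA A R :=
    le_csSup hbdd ⟨_, by rw [vnormA_smul hA, ht, inv_mul_cancel₀ hx.ne'], rfl⟩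
  rwa [map_smul, vnormA_smul hA, ht, inv_mul_le_iff₀ hx, mul_comm] at hle

theorem wA_le {W : H →L[ℂ] H} {c : ℝ} (hc : 0 ≤ c)
    (h : ∀ x, vnormA A x = 1 → ‖innA A (W x) x‖ ≤ c) : wA A W ≤ c :=
  Real.sSup_le (by rintro _ ⟨x, hx, rfl⟩; exact h x hx) hc

end ASeminorm

namespace IsAAdjoint

variable {A R Rs Q Qs S T Ts X Xs Y Ys : H →L[ℂ] H}

theorem innA_apply_left (hA : IsSelfAdjoint A) (h : IsAAdjoint A R Rs) (u v : H) :
    innA A (R u) v = innA A u (Rs v) := by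
  have hsymm := isSelfAdjoint_iff_isSymmetric.mp hA
  calc innA A (R u) v = ⟪R u, A v⟫_ℂ := hsymm _ _
    _ = ⟪u, A (Rs v)⟫_ℂ := by
        rw [← adjoint_inner_right, ← comp_apply, ← h, comp_apply]
    _ = innA A u (Rs v) := (hsymm _ _).symm

theorem symm (hA : IsSelfAdjoint A) (h : IsAAdjoint A R Rs) : IsAAdjoint A Rs R := by
  have h' := congrArg adjoint h
  rw [adjoint_comp, adjoint_comp, adjoint_adjoint, hA.adjoint_eq] at h'
  exact h'.symm

theorem comp (hR : IsAAdjoint A R Rs) (hQ : IsAAdjoint A Q Qs) :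
    IsAAdjoint A (R.comp Q) (Qs.comp Rs) := by
  unfold IsAAdjoint at *
  rw [← ContinuousLinearMap.comp_assoc, hQ, ContinuousLinearMap.comp_assoc, hR, adjoint_comp,
    ContinuousLinearMap.comp_assoc]

theorem add (hR : IsAAdjoint A R Rs) (hQ : IsAAdjoint A Q Qs) :
    IsAAdjoint A (R + Q) (Rs + Qs) := by
  unfold IsAAdjoint at *
  rw [comp_add, hR, hQ, map_add, add_comp]

theorem vnormA_apply_sq_le (hA : A.IsPositive) (hS : IsAAdjoint A S S) (x : H) :
    vnormA A (S x) ^ 2 ≤ vnormA A x * vnormA A (S (S x)) := by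
  rw [← re_innA_self hA, hS.innA_apply_left hA.isSelfAdjoint]
  exact re_innA_le hA _ _

theorem vnormA_apply_pow_two_pow_mul_le (hA : A.IsPositive) (hS : IsAAdjoint A S S) (x : H)
    (n : ℕ) :
    vnormA A (S x) ^ 2 ^ n * vnormA A x ≤ vnormA A ((S ^ 2 ^ n) x) * vnormA A x ^ 2 ^ n := by
  induction n generalizing S with
  | zero => simp
  | succ n ih =>
    have hpow : S ^ 2 ^ (n + 1) = (S * S) ^ 2 ^ n := by rw [pow_succ', pow_mul, sq]
    calc vnormA A (S x) ^ 2 ^ (n + 1) * vnormA A x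
        = (vnormA A (S x) ^ 2) ^ 2 ^ n * vnormA A x := by ring
      _ ≤ (vnormA A x * vnormA A ((S * S) x)) ^ 2 ^ n * vnormA A x :=
        mul_le_mul_of_nonneg_right
          (pow_le_pow_left₀ (sq_nonneg _) (hS.vnormA_apply_sq_le hA x) _) (vnormA_nonneg x)
      _ = vnormA A x ^ 2 ^ n * (vnormA A ((S * S) x) ^ 2 ^ n * vnormA A x) := by ring
      _ ≤ vnormA A x ^ 2 ^ n * (vnormA A (((S * S) ^ 2 ^ n) x) * vnormA A x ^ 2 ^ n) :=
        mul_le_mul_of_nonneg_left (ih (hS.comp hS)) (pow_nonneg (vnormA_nonneg x) _)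
      _ = vnormA A ((S ^ 2 ^ (n + 1)) x) * vnormA A x ^ 2 ^ (n + 1) := by rw [hpow]; ring

theorem vnormA_apply_le_norm_mul (hA : A.IsPositive) (hS : IsAAdjoint A S S) (x : H) :
    vnormA A (S x) ≤ ‖S‖ * vnormA A x := by
  rcases (vnormA_nonneg x).eq_or_lt with hx | hx
  · have := hS.vnormA_apply_sq_le hA x
    rw [← hx, zero_mul] at this
    rw [← hx, mul_zero]
    nlinarith [vnormA_nonneg (A := A) (S x)]
  refine le_of_forall_pow_two_pow_le_mul_pow (M := ‖CFC.sqrt A‖ * ‖x‖ / vnormA A x)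
    (mul_nonneg (norm_nonneg _) hx.le) fun n => le_of_mul_le_mul_right ?_ hx
  have hpow : vnormA A ((S ^ 2 ^ n) x) ≤ ‖CFC.sqrt A‖ * (‖S‖ ^ 2 ^ n * ‖x‖) :=
    (vnormA_le hA _).trans <| mul_le_mul_of_nonneg_left
      (((S ^ 2 ^ n).le_opNorm x).trans (by gcongr; exact norm_pow_le' S (by positivity)))
      (norm_nonneg _)
  calc vnormA A (S x) ^ 2 ^ n * vnormA A x
      ≤ vnormA A ((S ^ 2 ^ n) x) * vnormA A x ^ 2 ^ n := hS.vnormA_apply_pow_two_pow_mul_le hA x n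
    _ ≤ ‖CFC.sqrt A‖ * (‖S‖ ^ 2 ^ n * ‖x‖) * vnormA A x ^ 2 ^ n := by gcongr
    _ = ‖CFC.sqrt A‖ * ‖x‖ / vnormA A x * (‖S‖ * vnormA A x) ^ 2 ^ n * vnormA A x := by
      field_simp
      ring

theorem vnormA_apply_le_sqrt_norm_mul (hA : A.IsPositive) (h : IsAAdjoint A R Rs) (x : H) :
    vnormA A (R x) ≤ √‖Rs.comp R‖ * vnormA A x := by
  have hsq : vnormA A (R x) ^ 2 ≤ ‖Rs.comp R‖ * vnormA A x ^ 2 :=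
    calc vnormA A (R x) ^ 2 = (innA A x (Rs (R x))).re := by
          rw [← re_innA_self hA, h.innA_apply_left hA.isSelfAdjoint]
      _ ≤ vnormA A x * vnormA A (Rs (R x)) := re_innA_le hA _ _
      _ ≤ vnormA A x * (‖Rs.comp R‖ * vnormA A x) :=
          mul_le_mul_of_nonneg_left
            (((h.symm hA.isSelfAdjoint).comp h).vnormA_apply_le_norm_mul hA x) (vnormA_nonneg x)
      _ = ‖Rs.comp R‖ * vnormA A x ^ 2 := by ring
  rw [← Real.sqrt_sq (vnormA_nonneg (R x)), ← Real.sqrt_sq (vnormA_nonneg x),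
    ← Real.sqrt_mul (norm_nonneg _)]
  exact Real.sqrt_le_sqrt hsq

theorem vnormA_apply_le_opnormA_mul (hA : A.IsPositive) (h : IsAAdjoint A R Rs) (x : H) :
    vnormA A (R x) ≤ opnormA A R * vnormA A x :=
  vnormA_apply_le_opnormA_mul_of_le hA (h.vnormA_apply_le_sqrt_norm_mul hA) x

theorem vnormA_adjoint_apply_le_opnormA_mul (hA : A.IsPositive) (h : IsAAdjoint A R Rs) (x : H) :
    vnormA A (Rs x) ≤ opnormA A R * vnormA A x := by
  have hsq : vnormA A (Rs x) * vnormA A (Rs x) ≤ opnormA A R * vnormA A x * vnormA A (Rs x) :=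
    calc vnormA A (Rs x) * vnormA A (Rs x) = (innA A x (R (Rs x))).re := by
          rw [← sq, ← re_innA_self hA,
            (h.symm hA.isSelfAdjoint).innA_apply_left hA.isSelfAdjoint]
      _ ≤ vnormA A x * vnormA A (R (Rs x)) := re_innA_le hA _ _
      _ ≤ vnormA A x * (opnormA A R * vnormA A (Rs x)) :=
          mul_le_mul_of_nonneg_left (h.vnormA_apply_le_opnormA_mul hA _) (vnormA_nonneg x)
      _ = opnormA A R * vnormA A x * vnormA A (Rs x) := by ring
  rcases (vnormA_nonneg (Rs x)).eq_or_lt with h0 | h0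
  · rw [← h0]
    exact mul_nonneg (opnormA_nonneg A R) (vnormA_nonneg x)
  · exact le_of_mul_le_mul_right hsq h0

theorem vnormA_add_vnormA_adjoint_le (hA : A.IsPositive) (hT : IsAAdjoint A T Ts) (x : H) :
    vnormA A (T x) + vnormA A (Ts x) ≤
      √(2 * opnormA A (Ts.comp T + T.comp Ts)) * vnormA A x := by
  have hTs := hT.symm hA.isSelfAdjoint
  have hS := (hTs.comp hT).add (hT.comp hTs)
  have hsum : vnormA A (T x) ^ 2 + vnormA A (Ts x) ^ 2 ≤
      opnormA A (Ts.comp T + T.comp Ts) * vnormA A x ^ 2 :=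
    calc vnormA A (T x) ^ 2 + vnormA A (Ts x) ^ 2
        = (innA A ((Ts.comp T + T.comp Ts) x) x).re := by
          rw [add_apply, innA_add_left, comp_apply, comp_apply,
            hTs.innA_apply_left hA.isSelfAdjoint, hT.innA_apply_left hA.isSelfAdjoint (Ts x),
            Complex.add_re, re_innA_self hA, re_innA_self hA]
      _ ≤ vnormA A ((Ts.comp T + T.comp Ts) x) * vnormA A x := re_innA_le hA _ _
      _ ≤ opnormA A (Ts.comp T + T.comp Ts) * vnormA A x * vnormA A x :=
          mul_le_mul_of_nonneg_right (hS.vnormA_apply_le_opnormA_mul hA x) (vnormA_nonneg x)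
      _ = opnormA A (Ts.comp T + T.comp Ts) * vnormA A x ^ 2 := by ring
  rw [← Real.sqrt_sq (add_nonneg (vnormA_nonneg (T x)) (vnormA_nonneg (Ts x))),
    ← Real.sqrt_sq (vnormA_nonneg x),
    ← Real.sqrt_mul (mul_nonneg zero_le_two (opnormA_nonneg _ _))]
  refine Real.sqrt_le_sqrt ?_
  nlinarith [sq_nonneg (vnormA A (T x) - vnormA A (Ts x))]

theorem norm_innA_comp_add_norm_innA_comp_le (hA : A.IsPositive) (hT : IsAAdjoint A T Ts)
    (hX : IsAAdjoint A X Xs) (hY : IsAAdjoint A Y Ys) (x : H) :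
    ‖innA A (T (X x)) x‖ + ‖innA A (Y (T x)) x‖ ≤
      max (opnormA A X) (opnormA A Y) * √(2 * opnormA A (Ts.comp T + T.comp Ts)) *
        vnormA A x ^ 2 := by
  set M := max (opnormA A X) (opnormA A Y)
  have hM : 0 ≤ M := (opnormA_nonneg A X).trans (le_max_left _ _)
  have hXx : vnormA A (X x) ≤ M * vnormA A x :=
    (hX.vnormA_apply_le_opnormA_mul hA x).trans
      (mul_le_mul_of_nonneg_right (le_max_left _ _) (vnormA_nonneg x))
  have hYsx : vnormA A (Ys x) ≤ M * vnormA A x :=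
    (hY.vnormA_adjoint_apply_le_opnormA_mul hA x).trans
      (mul_le_mul_of_nonneg_right (le_max_right _ _) (vnormA_nonneg x))
  calc ‖innA A (T (X x)) x‖ + ‖innA A (Y (T x)) x‖
      = ‖innA A (X x) (Ts x)‖ + ‖innA A (T x) (Ys x)‖ := by
        rw [hT.innA_apply_left hA.isSelfAdjoint, hY.innA_apply_left hA.isSelfAdjoint]
    _ ≤ vnormA A (X x) * vnormA A (Ts x) + vnormA A (T x) * vnormA A (Ys x) :=
        add_le_add (norm_innA_le hA _ _) (norm_innA_le hA _ _)
    _ ≤ M * vnormA A x * vnormA A (Ts x) + vnormA A (T x) * (M * vnormA A x) :=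
        add_le_add (mul_le_mul_of_nonneg_right hXx (vnormA_nonneg _))
          (mul_le_mul_of_nonneg_left hYsx (vnormA_nonneg _))
    _ = M * vnormA A x * (vnormA A (T x) + vnormA A (Ts x)) := by ring
    _ ≤ M * vnormA A x * (√(2 * opnormA A (Ts.comp T + T.comp Ts)) * vnormA A x) :=
        mul_le_mul_of_nonneg_left (hT.vnormA_add_vnormA_adjoint_le hA x)
          (mul_nonneg hM (vnormA_nonneg x))
    _ = M * √(2 * opnormA A (Ts.comp T + T.comp Ts)) * vnormA A x ^ 2 := by ring

end IsAAdjoint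

theorem stmt13 (A T Ts X Xs Y Ys : H →L[ℂ] H) (hA : A.IsPositive)
    (hT : IsAAdjoint A T Ts) (hX : IsAAdjoint A X Xs) (hY : IsAAdjoint A Y Ys) :
    wA A (T.comp X + Y.comp T) ≤
        max (opnormA A X) (opnormA A Y) * Real.sqrt (2 * opnormA A (Ts.comp T + T.comp Ts)) ∧
      wA A (T.comp X - Y.comp T) ≤
        max (opnormA A X) (opnormA A Y) * Real.sqrt (2 * opnormA A (Ts.comp T + T.comp Ts)) := by
  have hbound := hT.norm_innA_comp_add_norm_innA_comp_le hA hX hY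
  have hnonneg : 0 ≤ max (opnormA A X) (opnormA A Y) *
      Real.sqrt (2 * opnormA A (Ts.comp T + T.comp Ts)) :=
    mul_nonneg ((opnormA_nonneg A X).trans (le_max_left _ _)) (Real.sqrt_nonneg _)
  refine ⟨wA_le hnonneg fun x hx => ?_, wA_le hnonneg fun x hx => ?_⟩
  · calc ‖innA A ((T.comp X + Y.comp T) x) x‖
        ≤ ‖innA A (T (X x)) x‖ + ‖innA A (Y (T x)) x‖ := by
          rw [add_apply, innA_add_left]
          exact norm_add_le _ _
      _ ≤ _ := by simpa [hx] using hbound x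
  · calc ‖innA A ((T.comp X - Y.comp T) x) x‖
        ≤ ‖innA A (T (X x)) x‖ + ‖innA A (Y (T x)) x‖ := by
          rw [sub_apply, innA_sub_left]
          exact norm_sub_le _ _
      _ ≤ _ := by simpa [hx] using hbound x
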